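/- arXiv:2101.12671 — 3 statements merged into one kernel-verified Lean document; each statement's English description precedes it below -/
import Mathlib

section
/- If a nonnegative random variable C satisfies the submultiplicative tail property P(C ≥ t₁ + t₂) ≤ P(C ≥ t₁)·P(C ≥ t₂) for all t₁, t₂ ≥ 0, and has finite positive mean, then P(C ≥ t) ≤ exp(1 - t/(e·E[C])) for all t ≥ 0. -/
/-!
Markov's inequality gives `P(C ≥ a) ≤ 1/e` at the level `a = e·E[C]`. Iterating
submultiplicativity, `P(C ≥ n·a) ≤ e⁻ⁿ`, and rounding `t/a` down to an integer `n > t/a - 1`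
turns this into `P(C ≥ t) ≤ exp(1 - t/a)`.
-/

open MeasureTheory Real

section Submultiplicative

variable {f : ℝ → ℝ}

theorem apply_nat_mul_le_pow (hf_zero : f 0 ≤ 1)
    (hf_sub : ∀ s t, 0 ≤ s → 0 ≤ t → f (s + t) ≤ f s * f t)
    {a : ℝ} (ha : 0 ≤ a) (hfa : 0 ≤ f a) (n : ℕ) : f (n * a) ≤ f a ^ n := by
  induction n with
  | zero => simpa using hf_zero
  | succ n ih =>
    calc f ((n + 1 : ℕ) * a) = f (n * a + a) := by push_cast; ring_nf
      _ ≤ f (n * a) * f a := hf_sub _ _ (by positivity) ha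
      _ ≤ f a ^ n * f a := mul_le_mul_of_nonneg_right ih hfa
      _ = f a ^ (n + 1) := (pow_succ _ _).symm

theorem apply_le_pow_floor (hf_anti : Antitone f) (hf_zero : f 0 ≤ 1)
    (hf_sub : ∀ s t, 0 ≤ s → 0 ≤ t → f (s + t) ≤ f s * f t)
    {a : ℝ} (ha : 0 ≤ a) (hfa : 0 ≤ f a) {t : ℝ} (ht : 0 ≤ t) :
    f t ≤ f a ^ ⌊t / a⌋₊ := by
  have h_floor : ⌊t / a⌋₊ * a ≤ t := by
    rcases ha.eq_or_lt with rfl | ha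
    · simpa using ht
    · exact (le_div_iff₀ ha).mp (Nat.floor_le (div_nonneg ht ha.le))
  exact (hf_anti h_floor).trans (apply_nat_mul_le_pow hf_zero hf_sub ha hfa _)

end Submultiplicative

theorem pow_floor_le_exp_one_sub {q x : ℝ} (hq : 0 ≤ q) (hqe : q ≤ exp (-1)) :
    q ^ ⌊x⌋₊ ≤ exp (1 - x) :=
  calc q ^ ⌊x⌋₊ ≤ exp (-1) ^ ⌊x⌋₊ := pow_le_pow_left₀ hq hqe _
    _ = exp (-⌊x⌋₊) := by rw [← exp_nat_mul]; ring_nf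
    _ ≤ exp (1 - x) := exp_le_exp.mpr (by linarith [Nat.lt_floor_add_one x])

theorem submultiplicative_tail_bound_general {Ω : Type*} [MeasurableSpace Ω]
    (P : Measure Ω) [IsProbabilityMeasure P] (C : Ω → ℝ)
    (hnonneg : ∀ᵐ ω ∂P, 0 ≤ C ω)
    (hint : Integrable C P) (hpos : 0 < ∫ ω, C ω ∂P)
    (hsub : ∀ t₁ t₂ : ℝ, 0 ≤ t₁ → 0 ≤ t₂ →
      P {ω | t₁ + t₂ ≤ C ω} ≤ P {ω | t₁ ≤ C ω} * P {ω | t₂ ≤ C ω}) :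
    ∀ t : ℝ, 0 ≤ t →
      (P {ω | t ≤ C ω}).toReal ≤
        Real.exp (1 - t / (Real.exp 1 * ∫ ω, C ω ∂P)) := by
  intro t ht
  set a := exp 1 * ∫ ω, C ω ∂P
  have ha : 0 < a := by positivity
  let S : ℝ → ℝ := fun s ↦ P.real {ω | s ≤ C ω}
  have hS_anti : Antitone S := fun s s' h ↦ measureReal_mono fun ω hω ↦ h.trans hω
  have hS_sub : ∀ s s', 0 ≤ s → 0 ≤ s' → S (s + s') ≤ S s * S s' := fun s s' hs hs' ↦ by
    simpa only [S, measureReal_def, ENNReal.toReal_mul] using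
      ENNReal.toReal_mono (by finiteness) (hsub s s' hs hs')
  have h_markov : S a ≤ exp (-1) := by
    have := mul_meas_ge_le_integral_of_nonneg hnonneg hint a
    calc S a ≤ (∫ ω, C ω ∂P) / a := by rw [le_div_iff₀ ha]; linarith
      _ = exp (-1) := by rw [exp_neg]; field_simp [a]; ring
  calc S t ≤ S a ^ ⌊t / a⌋₊ :=
        apply_le_pow_floor hS_anti measureReal_le_one hS_sub ha.le measureReal_nonneg ht
    _ ≤ exp (1 - t / a) := pow_floor_le_exp_one_sub measureReal_nonneg h_markov

/-- If a nonnegative random variable `C` has a submultiplicative survival function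
and finite positive mean, then `P(C ≥ t) ≤ exp (1 - t / (e * E C))` for all `t ≥ 0`. -/
theorem submultiplicative_tail_bound {Ω : Type*} [MeasurableSpace Ω]
    (P : Measure Ω) [IsProbabilityMeasure P] (C : Ω → ℝ)
    (hmeas : Measurable C) (hnonneg : ∀ᵐ ω ∂P, 0 ≤ C ω)
    (hint : Integrable C P) (hpos : 0 < ∫ ω, C ω ∂P)
    (hsub : ∀ t₁ t₂ : ℝ, 0 ≤ t₁ → 0 ≤ t₂ →
      P {ω | t₁ + t₂ ≤ C ω} ≤ P {ω | t₁ ≤ C ω} * P {ω | t₂ ≤ C ω}) :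
    ∀ t : ℝ, 0 ≤ t →
      (P {ω | t ≤ C ω}).toReal ≤
        Real.exp (1 - t / (Real.exp 1 * ∫ ω, C ω ∂P)) :=
  submultiplicative_tail_bound_general P C hnonneg hint hpos hsub
end

section
/- In the growth model on a compact metric space S (seed rate λ, growth rate v), for any compact x ⊆ S and any point σ ∈ S, the expected cover times started from x and from x ∪ ball(σ,0) satisfy h(x) − h(x ∪ {σ}) ≤ E[C(σ)], where h(x) is the expected time for the growth process started from initial covered set x to cover S, and C(σ) is the time for a fresh growth process (started from the empty set) to cover the point σ. -/
/-!
Use the same seeds for the process started from `x` and the one started from `x ∪ {σ₀}`.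
Once a ball of the fresh process has reached `σ₀`, at time `C(σ₀)`, it contains `x ∪ {σ₀}`
grown by the elapsed time, so by the triangle inequality the process from `x` at time
`C(σ₀) + t` contains the process from `x ∪ {σ₀}` at time `t`. Hence
`T(x) ≤ C(σ₀) + T(x ∪ {σ₀})` pathwise, and the inequality follows by taking expectations.
-/

open MeasureTheory ProbabilityTheory Metric Set

noncomputable section

/-- The interarrival increments of the seed arrival times. -/
def interArrival {Ω : Type*} (τ : ℕ → Ω → ℝ) : ℕ → Ω → ℝ
  | 0 => τ 0
  | (i+1) => fun ω => τ (i+1) ω - τ i ω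

/-- Covered region at time `t` for the growth model with growth rate `v`, started from the
initial covered set `x₀` (which also grows at rate `v`). -/
def coveredFrom {S : Type*} [MetricSpace S] {Ω : Type*} (x₀ : Set S) (v : ℝ)
    (τ : ℕ → Ω → ℝ) (σs : ℕ → Ω → S) (ω : Ω) (t : ℝ) : Set S :=
  {p | ∃ q ∈ x₀, dist p q ≤ v * t} ∪
    ⋃ i ∈ {i : ℕ | τ i ω ≤ t}, Metric.closedBall (σs i ω) (v * (t - τ i ω))

/-- Time for the growth process started from `x₀` to cover the whole space. -/
def coverTimeFrom {S : Type*} [MetricSpace S] {Ω : Type*} (x₀ : Set S) (v : ℝ)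
    (τ : ℕ → Ω → ℝ) (σs : ℕ → Ω → S) (ω : Ω) : ℝ :=
  sInf {t : ℝ | 0 ≤ t ∧ coveredFrom x₀ v τ σs ω t = Set.univ}

/-- Time for the growth process started from the empty set to cover the point `s`. -/
def pointCoverTime {S : Type*} [MetricSpace S] {Ω : Type*} (v : ℝ)
    (τ : ℕ → Ω → ℝ) (σs : ℕ → Ω → S) (s : S) (ω : Ω) : ℝ :=
  sInf {t : ℝ | 0 ≤ t ∧ s ∈ coveredFrom (∅ : Set S) v τ σs ω t}

/-- Growth model with seed rate `lam`: seeds arrive at times `0 < τ 0 < τ 1 < ⋯` of a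
rate-`lam` Poisson process at i.i.d. positions with law `μ`, all jointly independent. -/
structure IsGrowthModelRate {S : Type*} [MetricSpace S] [MeasurableSpace S]
    {Ω : Type*} [MeasurableSpace Ω] (P : Measure Ω) (μ : Measure S) (lam : ℝ)
    (τ : ℕ → Ω → ℝ) (σs : ℕ → Ω → S) : Prop where
  meas_τ : ∀ i, Measurable (τ i)
  meas_σ : ∀ i, Measurable (σs i)
  pos : ∀ ω, 0 < τ 0 ω
  mono : ∀ ω, StrictMono fun i => τ i ω
  tendsto : ∀ ω, Filter.Tendsto (fun i => τ i ω) Filter.atTop Filter.atTop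
  dist : ∀ i, P.map (fun ω => (interArrival τ i ω, σs i ω)) = (expMeasure lam).prod μ
  indep : iIndepFun
    (fun i ω => (interArrival τ i ω, σs i ω)) P

lemma le_csInf_add_csInf {a : ℝ} {A B : Set ℝ} (hA : A.Nonempty) (hB : B.Nonempty)
    (h : ∀ s ∈ A, ∀ t ∈ B, a ≤ s + t) : a ≤ sInf A + sInf B := by
  have hA' : ∀ t ∈ B, a - t ≤ sInf A :=
    fun t ht => le_csInf hA fun s hs => by linarith [h s hs t ht]
  have hB' : a - sInf A ≤ sInf B := le_csInf hB fun t ht => by linarith [hA' t ht]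
  linarith

lemma measurable_sInf_nonneg_setOf {Ω : Type*} [MeasurableSpace Ω] {E : Ω → ℝ → Prop}
    (hmono : ∀ ω, Monotone (E ω)) (hne : ∀ ω, ∃ t, 0 ≤ t ∧ E ω t)
    (hE : ∀ t, MeasurableSet {ω | E ω t}) :
    Measurable fun ω => sInf {t : ℝ | 0 ≤ t ∧ E ω t} := by
  have hbdd : ∀ ω, BddBelow {t : ℝ | 0 ≤ t ∧ E ω t} := fun _ => ⟨0, fun _ ht => ht.1⟩
  refine measurable_of_Iio fun a => ?_
  have hpre : (fun ω => sInf {t : ℝ | 0 ≤ t ∧ E ω t}) ⁻¹' Iio a =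
      ⋃ q : ℚ, {ω | (0 ≤ (q : ℝ) ∧ (q : ℝ) < a) ∧ E ω q} := by
    ext ω
    simp only [mem_preimage, mem_Iio, mem_iUnion, mem_ofPred_eq]
    constructor
    · intro h
      obtain ⟨t, ⟨ht0, hEt⟩, hta⟩ := (csInf_lt_iff (hbdd ω) (hne ω)).mp h
      obtain ⟨q, htq, hqa⟩ := exists_rat_btwn hta
      exact ⟨q, ⟨ht0.trans htq.le, hqa⟩, hmono ω htq.le hEt⟩
    · rintro ⟨q, ⟨hq0, hqa⟩, hEq⟩
      exact (csInf_le (hbdd ω) ⟨hq0, hEq⟩).trans_lt hqa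
  rw [hpre]
  exact MeasurableSet.iUnion fun q => (MeasurableSet.const _).inter (hE q)

lemma integrable_id_expMeasure {r : ℝ} (hr : 0 < r) : Integrable id (expMeasure r) := by
  have hmeas : Measurable (gammaPDF 1 r) := (measurable_gammaPDFReal 1 r).ennreal_ofReal
  rw [expMeasure, gammaMeasure,
    integrable_withDensity_iff hmeas (.of_forall fun _ => ENNReal.ofReal_lt_top)]
  have hdens : (fun x : ℝ => id x * (gammaPDF 1 r x).toReal) =
      (Ici 0).indicator fun x => r * (x ^ (1 : ℝ) * Real.exp (-r * x ^ (1 : ℝ))) := by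
    ext x
    by_cases hx : 0 ≤ x
    · rw [indicator_of_mem (mem_Ici.mpr hx), gammaPDF_of_nonneg hx,
        ENNReal.toReal_ofReal (by positivity)]
      simp [Real.Gamma_one]
      ring
    · simp [indicator_of_notMem (show x ∉ Ici 0 from hx), gammaPDF_of_neg (not_le.mp hx)]
  rw [hdens, integrable_indicator_iff measurableSet_Ici, integrableOn_Ici_iff_integrableOn_Ioi]
  exact (integrableOn_rpow_mul_exp_neg_mul_rpow (by norm_num) one_pos hr).const_mul r

section Growth

variable {S : Type*} [MetricSpace S] {Ω : Type*} {x₀ y : Set S} {v : ℝ}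
  {τ : ℕ → Ω → ℝ} {σs : ℕ → Ω → S} {ω : Ω}

lemma mem_coveredFrom {t : ℝ} {p : S} :
    p ∈ coveredFrom x₀ v τ σs ω t ↔
      (∃ q ∈ x₀, dist p q ≤ v * t) ∨ ∃ i, τ i ω ≤ t ∧ dist p (σs i ω) ≤ v * (t - τ i ω) := by
  simp [coveredFrom, mem_closedBall]

lemma coveredFrom_mono_time (hv : 0 ≤ v) : Monotone (coveredFrom x₀ v τ σs ω) := by
  intro s t hst p hp
  rcases mem_coveredFrom.mp hp with ⟨q, hq, hd⟩ | ⟨i, hi, hd⟩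
  · exact mem_coveredFrom.mpr (.inl ⟨q, hq, hd.trans (by gcongr)⟩)
  · exact mem_coveredFrom.mpr (.inr ⟨i, hi.trans hst, hd.trans (by gcongr)⟩)

lemma coveredFrom_mono_set (h : x₀ ⊆ y) (t : ℝ) :
    coveredFrom x₀ v τ σs ω t ⊆ coveredFrom y v τ σs ω t :=
  union_subset_union (fun _ ⟨q, hq, hd⟩ => ⟨q, h hq, hd⟩) subset_rfl

lemma coveredFrom_subset_coveredFrom_add (hv : 0 ≤ v) {s t : ℝ} (hs : 0 ≤ s) (ht : 0 ≤ t)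
    (hy : y ⊆ coveredFrom x₀ v τ σs ω s) :
    coveredFrom y v τ σs ω t ⊆ coveredFrom x₀ v τ σs ω (s + t) := by
  intro p hp
  rw [mem_coveredFrom] at hp ⊢
  rcases hp with ⟨q, hq, hpq⟩ | ⟨i, hi, hd⟩
  · rcases mem_coveredFrom.mp (hy hq) with ⟨q', hq', hqq'⟩ | ⟨i, hi, hd⟩
    · exact .inl ⟨q', hq', by linarith [dist_triangle p q q']⟩
    · exact .inr ⟨i, by linarith, by linarith [dist_triangle p q (σs i ω)]⟩
  · exact .inr ⟨i, by linarith, by nlinarith⟩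

lemma coveredFrom_first_seed_eq_univ [BoundedSpace S] (hv : 0 < v) :
    coveredFrom x₀ v τ σs ω (τ 0 ω + diam (univ : Set S) / v) = univ := by
  refine eq_univ_of_forall fun p => mem_coveredFrom.mpr (.inr ⟨0, ?_, ?_⟩)
  · exact le_add_of_nonneg_right (div_nonneg diam_nonneg hv.le)
  · rw [add_sub_cancel_left, mul_div_cancel₀ _ hv.ne']
    exact dist_le_diam_of_mem (Bornology.IsBounded.all _) (mem_univ _) (mem_univ _)

lemma isClosed_coveredFrom (hx₀ : IsCompact x₀)
    (htend : Filter.Tendsto (τ · ω) Filter.atTop Filter.atTop) (t : ℝ) :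
    IsClosed (coveredFrom x₀ v τ σs ω t) := by
  refine IsClosed.union ?_ ?_
  · rcases lt_or_ge (v * t) 0 with hneg | hnn
    · convert isClosed_empty
      exact eq_empty_of_forall_notMem fun p ⟨q, _, hd⟩ =>
        by linarith [dist_nonneg (x := p) (y := q)]
    · convert isClosed_cthickening (δ := v * t) (E := x₀)
      rw [hx₀.cthickening_eq_biUnion_closedBall hnn]
      ext p
      simp [mem_closedBall]
  · have hfin : {i | τ i ω ≤ t}.Finite := by
      have := Filter.eventually_cofinite.mp (Nat.cofinite_eq_atTop ▸ htend.eventually_gt_atTop t)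
      simp only [not_lt] at this
      exact this
    exact hfin.isClosed_biUnion fun i _ => isClosed_closedBall

lemma coverTimeFrom_nonneg : 0 ≤ coverTimeFrom x₀ v τ σs ω :=
  Real.sInf_nonneg fun _ ht => ht.1

lemma pointCoverTime_nonneg (σ₀ : S) : 0 ≤ pointCoverTime v τ σs σ₀ ω :=
  Real.sInf_nonneg fun _ ht => ht.1

variable [BoundedSpace S]

lemma exists_coveredFrom_eq_univ (hv : 0 < v) (hτ : 0 ≤ τ 0 ω) :
    ∃ t, 0 ≤ t ∧ coveredFrom x₀ v τ σs ω t = univ :=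
  ⟨_, add_nonneg hτ (div_nonneg diam_nonneg hv.le), coveredFrom_first_seed_eq_univ hv⟩

lemma pointCoverTime_le (hv : 0 < v) (hτ : 0 ≤ τ 0 ω) (σ₀ : S) :
    pointCoverTime v τ σs σ₀ ω ≤ τ 0 ω + diam (univ : Set S) / v :=
  csInf_le ⟨0, fun _ ht => ht.1⟩
    ⟨add_nonneg hτ (div_nonneg diam_nonneg hv.le),
      eq_univ_iff_forall.mp (coveredFrom_first_seed_eq_univ hv) σ₀⟩

lemma coverTimeFrom_anti (hv : 0 < v) (hτ : 0 ≤ τ 0 ω) (h : x₀ ⊆ y) :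
    coverTimeFrom y v τ σs ω ≤ coverTimeFrom x₀ v τ σs ω :=
  csInf_le_csInf ⟨0, fun _ ht => ht.1⟩ (exists_coveredFrom_eq_univ hv hτ)
    fun _ ⟨ht0, hcov⟩ => ⟨ht0, eq_univ_of_univ_subset (hcov ▸ coveredFrom_mono_set h _)⟩

lemma coverTimeFrom_le_pointCoverTime_add (hv : 0 < v) (hτ : 0 ≤ τ 0 ω) (σ₀ : S) :
    coverTimeFrom x₀ v τ σs ω ≤
      pointCoverTime v τ σs σ₀ ω + coverTimeFrom (insert σ₀ x₀) v τ σs ω := by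
  obtain ⟨t₀, ht₀, hcov₀⟩ := exists_coveredFrom_eq_univ (x₀ := ∅) (σs := σs) hv hτ
  refine le_csInf_add_csInf ⟨t₀, ht₀, hcov₀ ▸ mem_univ σ₀⟩ (exists_coveredFrom_eq_univ hv hτ)
    fun s ⟨hs, hσ₀⟩ t ⟨ht, hcov⟩ => csInf_le ⟨0, fun _ h => h.1⟩ ⟨add_nonneg hs ht, ?_⟩
  have hinsert : insert σ₀ x₀ ⊆ coveredFrom x₀ v τ σs ω s :=
    insert_subset (coveredFrom_mono_set (empty_subset x₀) s hσ₀)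
      fun q hq => mem_coveredFrom.mpr (.inl ⟨q, hq, by simpa using mul_nonneg hv.le hs⟩)
  exact eq_univ_of_univ_subset
    (hcov ▸ coveredFrom_subset_coveredFrom_add hv.le hs ht hinsert)

end Growth

section Measurability

variable {S : Type*} [MetricSpace S] [MeasurableSpace S] [BorelSpace S]
  {Ω : Type*} [MeasurableSpace Ω] {x₀ : Set S} {v : ℝ} {τ : ℕ → Ω → ℝ} {σs : ℕ → Ω → S}

lemma measurableSet_mem_coveredFrom (hτ : ∀ i, Measurable (τ i))
    (hσ : ∀ i, Measurable (σs i)) (p : S) (t : ℝ) :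
    MeasurableSet {ω | p ∈ coveredFrom x₀ v τ σs ω t} := by
  simp only [mem_coveredFrom, ofPred_or]
  refine (MeasurableSet.const _).union ?_
  simp only [ofPred_exists, ofPred_and]
  have hdist : ∀ i, Measurable fun ω => dist p (σs i ω) :=
    fun i => (continuous_const.dist continuous_id).measurable.comp (hσ i)
  exact .iUnion fun i => (measurableSet_le (hτ i) measurable_const).inter
    (measurableSet_le (hdist i) ((measurable_const.sub (hτ i)).const_mul v))

variable [CompactSpace S]

lemma measurableSet_coveredFrom_eq_univ (hx₀ : IsCompact x₀) (hτ : ∀ i, Measurable (τ i))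
    (hσ : ∀ i, Measurable (σs i))
    (htend : ∀ ω, Filter.Tendsto (τ · ω) Filter.atTop Filter.atTop) (t : ℝ) :
    MeasurableSet {ω | coveredFrom x₀ v τ σs ω t = univ} := by
  obtain ⟨D, hDc, hD⟩ := TopologicalSpace.exists_countable_dense S
  -- A closed set is everything as soon as it contains a dense set.
  have hiff : {ω | coveredFrom x₀ v τ σs ω t = univ} =
      ⋂ p ∈ D, {ω | p ∈ coveredFrom x₀ v τ σs ω t} := by
    ext ω
    simp only [mem_ofPred_eq, mem_iInter]
    refine ⟨fun h p _ => h ▸ mem_univ p, fun h => ?_⟩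
    rw [← (isClosed_coveredFrom hx₀ (htend ω) t).closure_eq]
    exact (hD.mono fun p hp => h p hp).closure_eq
  rw [hiff]
  exact MeasurableSet.biInter hDc fun p _ => measurableSet_mem_coveredFrom hτ hσ p t

lemma measurable_coverTimeFrom (hx₀ : IsCompact x₀) (hv : 0 < v)
    (hτ : ∀ i, Measurable (τ i)) (hσ : ∀ i, Measurable (σs i)) (hτ0 : ∀ ω, 0 ≤ τ 0 ω)
    (htend : ∀ ω, Filter.Tendsto (τ · ω) Filter.atTop Filter.atTop) :
    Measurable (coverTimeFrom x₀ v τ σs) :=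
  measurable_sInf_nonneg_setOf
    (fun _ _ _ hst h => eq_univ_of_univ_subset (h ▸ coveredFrom_mono_time hv.le hst))
    (fun ω => exists_coveredFrom_eq_univ hv (hτ0 ω))
    (measurableSet_coveredFrom_eq_univ hx₀ hτ hσ htend)

lemma measurable_pointCoverTime (hv : 0 < v) (hτ : ∀ i, Measurable (τ i))
    (hσ : ∀ i, Measurable (σs i)) (hτ0 : ∀ ω, 0 ≤ τ 0 ω) (σ₀ : S) :
    Measurable (pointCoverTime v τ σs σ₀) :=
  measurable_sInf_nonneg_setOf (fun _ _ _ hst h => coveredFrom_mono_time hv.le hst h)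
    (fun ω => (exists_coveredFrom_eq_univ hv (hτ0 ω)).imp fun _ ⟨ht, h⟩ => ⟨ht, h ▸ trivial⟩)
    (measurableSet_mem_coveredFrom hτ hσ σ₀)

end Measurability

lemma IsGrowthModelRate.integrable_first_arrival {S : Type*} [MetricSpace S]
    [MeasurableSpace S] {Ω : Type*} [MeasurableSpace Ω] {P : Measure Ω} {μ : Measure S}
    [IsFiniteMeasure μ] {lam : ℝ} (hlam : 0 < lam) {τ : ℕ → Ω → ℝ} {σs : ℕ → Ω → S}
    (hmodel : IsGrowthModelRate P μ lam τ σs) : Integrable (τ 0) P := by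
  have hpair : Measurable fun ω => (interArrival τ 0 ω, σs 0 ω) :=
    (hmodel.meas_τ 0).prodMk (hmodel.meas_σ 0)
  have hfst : Integrable Prod.fst (P.map fun ω => (interArrival τ 0 ω, σs 0 ω)) := by
    rw [hmodel.dist 0]
    exact (integrable_id_expMeasure hlam).comp_fst μ
  exact (integrable_map_measure measurable_fst.aestronglyMeasurable hpair.aemeasurable).mp hfst

theorem growth_model_coupling_inequality_general
    {S : Type*} [MetricSpace S] [CompactSpace S]
    [MeasurableSpace S] [BorelSpace S]
    {Ω : Type*} [MeasurableSpace Ω] (P : Measure Ω) [IsProbabilityMeasure P]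
    (μ : Measure S) [IsProbabilityMeasure μ] (lam v : ℝ) (hlam : 0 < lam) (hv : 0 < v)
    (τ : ℕ → Ω → ℝ) (σs : ℕ → Ω → S)
    (hmodel : IsGrowthModelRate P μ lam τ σs)
    (x : Set S) (hx : IsCompact x) (σ₀ : S) :
    (∫ ω, coverTimeFrom x v τ σs ω ∂P) - ∫ ω, coverTimeFrom (insert σ₀ x) v τ σs ω ∂P ≤
      ∫ ω, pointCoverTime v τ σs σ₀ ω ∂P := by
  have hτ0 : ∀ ω, 0 ≤ τ 0 ω := fun ω => (hmodel.pos ω).le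
  have hC : Integrable (pointCoverTime v τ σs σ₀) P :=
    ((hmodel.integrable_first_arrival hlam).add (integrable_const _)).mono'
      (measurable_pointCoverTime hv hmodel.meas_τ hmodel.meas_σ hτ0 σ₀).aestronglyMeasurable
      (.of_forall fun ω => (abs_of_nonneg (pointCoverTime_nonneg σ₀)).trans_le
        (pointCoverTime_le hv (hτ0 ω) σ₀))
  by_cases hT : Integrable (coverTimeFrom x v τ σs) P
  · have hT' : Integrable (coverTimeFrom (insert σ₀ x) v τ σs) P :=
      hT.mono' (measurable_coverTimeFrom (hx.insert σ₀) hv hmodel.meas_τ hmodel.meas_σ hτ0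
        hmodel.tendsto).aestronglyMeasurable
        (.of_forall fun ω => (abs_of_nonneg coverTimeFrom_nonneg).trans_le
          (coverTimeFrom_anti hv (hτ0 ω) (subset_insert σ₀ x)))
    have hpathwise := integral_mono hT (hC.add hT') fun ω =>
      coverTimeFrom_le_pointCoverTime_add (x₀ := x) (σs := σs) hv (hτ0 ω) σ₀
    rw [integral_add' hC hT'] at hpathwise
    linarith
  · have hT'0 : 0 ≤ ∫ ω, coverTimeFrom (insert σ₀ x) v τ σs ω ∂P :=
      integral_nonneg fun _ => coverTimeFrom_nonneg
    have hC0 : 0 ≤ ∫ ω, pointCoverTime v τ σs σ₀ ω ∂P :=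
      integral_nonneg fun _ => pointCoverTime_nonneg σ₀
    rw [integral_undef hT]
    linarith

/-- Key coupling inequality for the growth model: adding the extra seed point `σ₀` to the
initial set decreases the expected cover time by at most the expected time `E[C(σ₀)]` for a
fresh growth process to reach `σ₀`. -/
theorem growth_model_coupling_inequality
    {S : Type*} [MetricSpace S] [CompactSpace S] [Nonempty S]
    [MeasurableSpace S] [BorelSpace S]
    {Ω : Type*} [MeasurableSpace Ω] (P : Measure Ω) [IsProbabilityMeasure P]
    (μ : Measure S) [IsProbabilityMeasure μ] (lam v : ℝ) (hlam : 0 < lam) (hv : 0 < v)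
    (τ : ℕ → Ω → ℝ) (σs : ℕ → Ω → S)
    (hmodel : IsGrowthModelRate P μ lam τ σs)
    (x : Set S) (hx : IsCompact x) (σ₀ : S) :
    (∫ ω, coverTimeFrom x v τ σs ω ∂P) - ∫ ω, coverTimeFrom (insert σ₀ x) v τ σs ω ∂P ≤
      ∫ ω, pointCoverTime v τ σs σ₀ ω ∂P :=
  growth_model_coupling_inequality_general P μ lam v hlam hv τ σs hmodel x hx σ₀

end
end

section
/- In the standardized growth model on a connected compact metric space of diameter Δ, there is an absolute constant κ₁ such that Δ ≤ κ₁·(E[C])². -/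
open MeasureTheory ProbabilityTheory Metric Set

noncomputable section

/-- The covered region at time `t` in the standardized growth model. -/
def coveredSet {S : Type*} [MetricSpace S] {Ω : Type*} (τ : ℕ → Ω → ℝ)
    (σs : ℕ → Ω → S) (ω : Ω) (t : ℝ) : Set S :=
  ⋃ i ∈ {i : ℕ | τ i ω ≤ t}, Metric.closedBall (σs i ω) (t - τ i ω)

/-- The cover time of the whole space. -/
def coverTime {S : Type*} [MetricSpace S] {Ω : Type*} (τ : ℕ → Ω → ℝ)
    (σs : ℕ → Ω → S) (ω : Ω) : ℝ :=
  sInf {t : ℝ | 0 ≤ t ∧ coveredSet τ σs ω t = Set.univ}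

/-- The standardized growth model (`λ = v = 1`): seeds arrive at the times
`0 < τ 0 < τ 1 < ⋯` of a rate-1 Poisson process (i.i.d. Exponential(1) interarrivals),
at i.i.d. positions `σs i` with distribution `μ`, all jointly independent. -/
structure IsGrowthModel {S : Type*} [MetricSpace S] [MeasurableSpace S]
    {Ω : Type*} [MeasurableSpace Ω] (P : Measure Ω) (μ : Measure S)
    (τ : ℕ → Ω → ℝ) (σs : ℕ → Ω → S) : Prop where
  meas_τ : ∀ i, Measurable (τ i)
  meas_σ : ∀ i, Measurable (σs i)
  pos : ∀ ω, 0 < τ 0 ω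
  mono : ∀ ω, StrictMono fun i => τ i ω
  tendsto : ∀ ω, Filter.Tendsto (fun i => τ i ω) Filter.atTop Filter.atTop
  dist : ∀ i, P.map (fun ω => (interArrival τ i ω, σs i ω)) = (expMeasure 1).prod μ
  indep : iIndepFun
    (fun i ω => (interArrival τ i ω, σs i ω)) P

/-!
Write `m = E[C]`; since `C ≥ τ₀` and `τ₀` is Exp(1)-distributed, `m ≥ 1`. By Markov's inequality
`C < 3m` with probability at least `2/3`. The arrival time `τ_k` is a sum of `k + 1` independent
Exp(1) variables, so `E[e^{-τ_k}] = 2^{-(k+1)}` and, as `5 log 2 > 3`, for `k = ⌈5m⌉` the Chernoff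
bound gives `τ_k > 3m` with probability at least `1/2`. In a realization where both events occur,
`S` is covered by the `k` closed balls of radius `3m` around the first `k` seeds, and since `S` is
connected its diameter is at most the sum of their diameters, `6mk ≤ 36m²`.
-/

-- `dist x '' s` is an interval containing `[0, dist x y]`, covered by the sets `dist x '' B i`,
-- each of Lebesgue measure at most `ediam (B i)`.
theorem IsPreconnected.ediam_le_sum_ediam {X ι : Type*} [PseudoMetricSpace X] {s : Set X}
    (hs : IsPreconnected s) {t : Finset ι} {B : ι → Set X} (hcover : s ⊆ ⋃ i ∈ t, B i) :
    ediam s ≤ ∑ i ∈ t, ediam (B i) := by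
  refine ediam_le fun x hx y hy => ?_
  have hIcc : Icc 0 (dist x y) ⊆ dist x '' s :=
    (hs.image _ (LipschitzWith.dist_right x).continuous.continuousOn).Icc_subset
      ⟨x, hx, dist_self x⟩ ⟨y, hy, rfl⟩
  calc edist x y = volume (Icc 0 (dist x y)) := by
        rw [Real.volume_Icc, sub_zero, edist_dist]
    _ ≤ volume (⋃ i ∈ t, dist x '' B i) := by
        rw [← image_iUnion₂]
        exact measure_mono (hIcc.trans (image_mono hcover))
    _ ≤ ∑ i ∈ t, volume (dist x '' B i) := measure_biUnion_finset_le t _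
    _ ≤ ∑ i ∈ t, ediam (B i) := Finset.sum_le_sum fun i _ =>
        (Real.volume_le_diam _).trans <| by
          simpa using (LipschitzWith.dist_right x).ediam_image_le (B i)

theorem IsPreconnected.diam_le_card_mul_of_subset_biUnion_closedBall {X ι : Type*}
    [PseudoMetricSpace X] {s : Set X} (hs : IsPreconnected s) {t : Finset ι} {c : ι → X}
    {r : ℝ} (hr : 0 ≤ r) (hcover : s ⊆ ⋃ i ∈ t, closedBall (c i) r) :
    diam s ≤ t.card * (2 * r) := by
  have hball : ∀ i, ediam (closedBall (c i) r) ≤ ENNReal.ofReal (2 * r) := fun i =>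
    ediam_le_of_forall_dist_le fun a ha b hb =>
      (dist_le_diam_of_mem isBounded_closedBall ha hb).trans (diam_closedBall hr)
  refine ENNReal.toReal_le_of_le_ofReal (by positivity) ?_
  calc ediam s ≤ ∑ i ∈ t, ediam (closedBall (c i) r) := hs.ediam_le_sum_ediam hcover
    _ ≤ ∑ i ∈ t, ENNReal.ofReal (2 * r) := Finset.sum_le_sum fun i _ => hball i
    _ = ENNReal.ofReal (t.card * (2 * r)) := by
        rw [Finset.sum_const, nsmul_eq_mul, ENNReal.ofReal_mul (Nat.cast_nonneg _),
          ENNReal.ofReal_natCast]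

theorem exists_notMem_notMem_of_measureReal_add_lt_one {Ω : Type*} [MeasurableSpace Ω]
    {P : Measure Ω} [IsProbabilityMeasure P] {A B : Set Ω} (h : P.real A + P.real B < 1) :
    ∃ ω, ω ∉ A ∧ ω ∉ B := by
  by_contra! hAB
  have hcover : univ ⊆ A ∪ B := fun ω _ => or_iff_not_imp_left.2 (hAB ω)
  have := (measureReal_mono (μ := P) hcover).trans (measureReal_union_le A B)
  rw [probReal_univ] at this
  linarith

theorem integral_expMeasure_one (g : ℝ → ℝ) :
    ∫ x, g x ∂expMeasure 1 = ∫ x in Ioi 0, Real.exp (-x) * g x := by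
  rw [expMeasure, gammaMeasure, integral_withDensity_eq_integral_toReal_smul (f := gammaPDF 1 1)
    (measurable_gammaPDFReal 1 1).ennreal_ofReal (ae_of_all _ fun _ => ENNReal.ofReal_lt_top),
    ← integral_Ici_eq_integral_Ioi, ← integral_indicator measurableSet_Ici]
  congr 1 with x
  by_cases hx : 0 ≤ x
  · simp [gammaPDF, gammaPDFReal, hx, (Real.exp_pos _).le]
  · simp [gammaPDF, gammaPDFReal, hx]

theorem integral_id_expMeasure_one : ∫ x, x ∂expMeasure 1 = 1 := by
  have := Real.integral_rpow_mul_exp_neg_mul_Ioi two_pos one_pos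
  norm_num at this
  rw [integral_expMeasure_one]
  simpa [mul_comm] using this

theorem mgf_id_expMeasure_one_neg_one : mgf id (expMeasure 1) (-1) = 2⁻¹ := by
  have := Real.integral_rpow_mul_exp_neg_mul_Ioi one_pos two_pos
  norm_num at this
  rw [mgf, integral_expMeasure_one]
  simpa [← Real.exp_add, ← two_mul] using this

theorem measureReal_sum_le_le_of_identDistrib_expMeasure {Ω ι : Type*} [MeasurableSpace Ω]
    {P : Measure Ω} [IsProbabilityMeasure P] {X : ι → Ω → ℝ} (hindep : iIndepFun X P)
    (hmeas : ∀ i, Measurable (X i)) (hX : ∀ i, IdentDistrib (X i) id P (expMeasure 1))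
    (s : Finset ι) (t : ℝ) :
    P.real {ω | ∑ i ∈ s, X i ω ≤ t} ≤ Real.exp t * 2⁻¹ ^ s.card := by
  have hmgf : ∀ i, mgf (X i) P (-1) = 2⁻¹ := fun i =>
    (mgf_congr_of_identDistrib _ _ (hX i) _).trans mgf_id_expMeasure_one_neg_one
  have hint : ∀ i ∈ s, Integrable (fun ω => Real.exp (-1 * X i ω)) P := fun i _ =>
    .of_integral_ne_zero <| by rw [← mgf, hmgf]; norm_num
  calc P.real {ω | ∑ i ∈ s, X i ω ≤ t}
      ≤ Real.exp (-(-1) * t) * mgf (∑ i ∈ s, X i) P (-1) := by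
        simpa using measure_le_le_exp_mul_mgf t (by norm_num)
          (hindep.integrable_exp_mul_sum hmeas hint)
    _ = Real.exp t * 2⁻¹ ^ s.card := by
        rw [hindep.mgf_sum hmeas, Finset.prod_congr rfl fun i _ => hmgf i]
        simp

theorem exp_three_mul_mul_inv_two_pow_succ_le {m : ℝ} {k : ℕ} (hk : 5 * m ≤ k) :
    Real.exp (3 * m) * 2⁻¹ ^ (k + 1) ≤ 2⁻¹ := by
  have hexp : Real.exp (3 * m) ≤ 2 ^ k := by
    rw [← Real.exp_log (by positivity : (0 : ℝ) < 2 ^ k), Real.log_pow]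
    exact Real.exp_le_exp.2
      (by nlinarith [Real.log_two_gt_d9, (Nat.cast_nonneg k : (0 : ℝ) ≤ k)])
  calc Real.exp (3 * m) * 2⁻¹ ^ (k + 1) = Real.exp (3 * m) / 2 ^ k * 2⁻¹ := by
        rw [pow_succ, inv_pow]; ring
    _ ≤ 1 * 2⁻¹ := by gcongr; exact (div_le_one (by positivity)).2 hexp
    _ = 2⁻¹ := one_mul _

theorem sum_range_succ_interArrival {Ω : Type*} (τ : ℕ → Ω → ℝ) (ω : Ω) (i : ℕ) :
    ∑ j ∈ Finset.range (i + 1), interArrival τ j ω = τ i ω := by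
  induction i with
  | zero => simp [interArrival]
  | succ i ih => rw [Finset.sum_range_succ, ih]; simp [interArrival]

section CoverTime

open Filter TopologicalSpace

variable {S Ω : Type*} [MetricSpace S] {τ : ℕ → Ω → ℝ} {σs : ℕ → Ω → S} {ω : Ω}
  {t : ℝ}

def arrivalTime (τ : ℕ → Ω → ℝ) (σs : ℕ → Ω → S) (ω : Ω) (x : S) : ℝ :=
  ⨅ i, τ i ω + dist x (σs i ω)

theorem mem_coveredSet {x : S} :
    x ∈ coveredSet τ σs ω t ↔ ∃ i, τ i ω + dist x (σs i ω) ≤ t := by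
  simp only [coveredSet, mem_iUnion, mem_ofPred_eq, mem_closedBall, exists_prop]
  exact exists_congr fun i => ⟨fun h => by linarith,
    fun h => ⟨by linarith [dist_nonneg (x := x) (y := σs i ω)], by linarith⟩⟩

theorem le_arrivalTime {a : ℝ} (h : ∀ i, a ≤ τ i ω) (x : S) :
    a ≤ arrivalTime τ σs ω x :=
  le_ciInf fun i => le_add_of_le_of_nonneg (h i) dist_nonneg

theorem tendsto_add_dist_atTop (htend : Tendsto (fun i => τ i ω) atTop atTop) (x : S) :
    Tendsto (fun i => τ i ω + dist x (σs i ω)) atTop atTop :=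
  tendsto_atTop_mono (fun _ => le_add_of_nonneg_right dist_nonneg) htend

theorem arrivalTime_le (htend : Tendsto (fun i => τ i ω) atTop atTop) (x : S) (i : ℕ) :
    arrivalTime τ σs ω x ≤ τ i ω + dist x (σs i ω) :=
  ciInf_le (bddBelow_range_of_tendsto_atTop_atTop (tendsto_add_dist_atTop htend x)) i

theorem arrivalTime_le_add_dist (htend : Tendsto (fun i => τ i ω) atTop atTop) (x y : S) :
    arrivalTime τ σs ω x ≤ arrivalTime τ σs ω y + dist x y := by
  have h : ∀ i, arrivalTime τ σs ω x - dist x y ≤ τ i ω + dist y (σs i ω) := fun i => by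
    linarith [arrivalTime_le (σs := σs) htend x i, dist_triangle x y (σs i ω)]
  have h' : arrivalTime τ σs ω x - dist x y ≤ arrivalTime τ σs ω y := le_ciInf h
  linarith

theorem mem_coveredSet_iff_arrivalTime_le (htend : Tendsto (fun i => τ i ω) atTop atTop)
    {x : S} : x ∈ coveredSet τ σs ω t ↔ arrivalTime τ σs ω x ≤ t := by
  rw [mem_coveredSet]
  refine ⟨fun ⟨i, hi⟩ => (arrivalTime_le htend x i).trans hi, fun h => ?_⟩
  obtain ⟨i, hi⟩ := (Nat.cofinite_eq_atTop ▸ tendsto_add_dist_atTop (σs := σs) htend x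
    : Tendsto _ cofinite atTop).exists_forall_le
  exact ⟨i, (le_ciInf hi).trans h⟩

theorem coveredSet_eq_univ_iff (htend : Tendsto (fun i => τ i ω) atTop atTop) :
    coveredSet τ σs ω t = univ ↔ ∀ x, arrivalTime τ σs ω x ≤ t := by
  simp only [eq_univ_iff_forall, mem_coveredSet_iff_arrivalTime_le htend]

variable [CompactSpace S] [Nonempty S]

theorem arrivalTime_le_iSup_denseSeq (htend : Tendsto (fun i => τ i ω) atTop atTop) (x : S) :
    arrivalTime τ σs ω x ≤ ⨆ n, arrivalTime τ σs ω (denseSeq S n) := by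
  have hbdd : BddAbove (range fun n => arrivalTime τ σs ω (denseSeq S n)) :=
    ⟨τ 0 ω + diam (univ : Set S), forall_mem_range.2 fun n => (arrivalTime_le htend _ 0).trans
      (by gcongr; exact dist_le_diam_of_mem isBounded_of_compactSpace (mem_univ _) (mem_univ _))⟩
  refine le_of_forall_pos_le_add fun ε hε => ?_
  obtain ⟨n, hn⟩ := (denseRange_denseSeq S).exists_dist_lt x hε
  calc arrivalTime τ σs ω x ≤ arrivalTime τ σs ω (denseSeq S n) + dist x (denseSeq S n) :=
        arrivalTime_le_add_dist htend _ _
    _ ≤ (⨆ n, arrivalTime τ σs ω (denseSeq S n)) + ε := add_le_add (le_ciSup hbdd n) hn.le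

theorem coverTime_eq_iSup_arrivalTime (hτ : ∀ i, 0 ≤ τ i ω)
    (htend : Tendsto (fun i => τ i ω) atTop atTop) :
    coverTime τ σs ω = ⨆ n, arrivalTime τ σs ω (denseSeq S n) := by
  set A := ⨆ n, arrivalTime τ σs ω (denseSeq S n)
  have hcov : ∀ t, coveredSet τ σs ω t = univ ↔ A ≤ t := fun t => by
    rw [coveredSet_eq_univ_iff htend]
    exact ⟨fun h => ciSup_le fun n => h _,
      fun h x => (arrivalTime_le_iSup_denseSeq htend x).trans h⟩
  have hA : 0 ≤ A :=
    (le_arrivalTime hτ _).trans (arrivalTime_le_iSup_denseSeq htend (denseSeq S 0))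
  have hset : {t | 0 ≤ t ∧ coveredSet τ σs ω t = univ} = Ici A := by
    ext t
    simp only [mem_ofPred_eq, hcov, mem_Ici]
    exact ⟨And.right, fun h => ⟨hA.trans h, h⟩⟩
  rw [coverTime, hset, csInf_Ici]

theorem univ_subset_biUnion_closedBall (hτ : ∀ i, 0 ≤ τ i ω) (hmono : Monotone (τ · ω))
    (htend : Tendsto (fun i => τ i ω) atTop atTop) {k : ℕ} (hC : coverTime τ σs ω ≤ t)
    (hk : t < τ k ω) : univ ⊆ ⋃ i ∈ Finset.range k, closedBall (σs i ω) t := by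
  intro x _
  have hx : arrivalTime τ σs ω x ≤ t := by
    rw [coverTime_eq_iSup_arrivalTime hτ htend] at hC
    exact (arrivalTime_le_iSup_denseSeq htend x).trans hC
  obtain ⟨i, hi⟩ := mem_coveredSet.1 ((mem_coveredSet_iff_arrivalTime_le htend).2 hx)
  have hik : i < k := by
    by_contra! hki
    linarith [hmono hki, dist_nonneg (x := x) (y := σs i ω)]
  exact mem_iUnion₂.2 ⟨i, Finset.mem_range.2 hik, mem_closedBall.2 (by linarith [hτ i])⟩

end CoverTime

namespace IsGrowthModel

open TopologicalSpace

variable {S Ω : Type*} [MetricSpace S] [MeasurableSpace S] [MeasurableSpace Ω]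
  {P : Measure Ω} {μ : Measure S} {τ : ℕ → Ω → ℝ} {σs : ℕ → Ω → S}

theorem tau_zero_le (h : IsGrowthModel P μ τ σs) (ω : Ω) (i : ℕ) : τ 0 ω ≤ τ i ω :=
  (h.mono ω).monotone (Nat.zero_le i)

theorem tau_nonneg (h : IsGrowthModel P μ τ σs) (ω : Ω) (i : ℕ) : 0 ≤ τ i ω :=
  (h.pos ω).le.trans (h.tau_zero_le ω i)

theorem measurable_interArrival (h : IsGrowthModel P μ τ σs) :
    ∀ i, Measurable (interArrival τ i)
  | 0 => h.meas_τ 0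
  | i + 1 => (h.meas_τ (i + 1)).sub (h.meas_τ i)

theorem identDistrib_interArrival [IsProbabilityMeasure μ] (h : IsGrowthModel P μ τ σs)
    (i : ℕ) : IdentDistrib (interArrival τ i) id P (expMeasure 1) where
  aemeasurable_fst := (h.measurable_interArrival i).aemeasurable
  aemeasurable_snd := aemeasurable_id
  map_eq := by
    have hpair := (h.measurable_interArrival i).prodMk (h.meas_σ i)
    calc P.map (interArrival τ i)
        = (P.map fun ω => (interArrival τ i ω, σs i ω)).map Prod.fst := by
          rw [Measure.map_map measurable_fst hpair]; rfl
      _ = (expMeasure 1).map id := by rw [h.dist i, Measure.map_fst_prod]; simp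

theorem measureReal_tau_le_le [IsProbabilityMeasure P] [IsProbabilityMeasure μ]
    (h : IsGrowthModel P μ τ σs) (k : ℕ) (t : ℝ) :
    P.real {ω | τ k ω ≤ t} ≤ Real.exp t * 2⁻¹ ^ (k + 1) := by
  simpa [sum_range_succ_interArrival] using measureReal_sum_le_le_of_identDistrib_expMeasure
    (h.indep.comp (fun _ => Prod.fst) fun _ => measurable_fst) h.measurable_interArrival
    h.identDistrib_interArrival (Finset.range (k + 1)) t

variable [CompactSpace S] [Nonempty S]

theorem coverTime_eq (h : IsGrowthModel P μ τ σs) (ω : Ω) :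
    coverTime τ σs ω = ⨆ n, arrivalTime τ σs ω (denseSeq S n) :=
  coverTime_eq_iSup_arrivalTime (h.tau_nonneg ω) (h.tendsto ω)

theorem tau_zero_le_coverTime (h : IsGrowthModel P μ τ σs) (ω : Ω) :
    τ 0 ω ≤ coverTime τ σs ω :=
  h.coverTime_eq ω ▸ (le_arrivalTime (h.tau_zero_le ω) _).trans
    (arrivalTime_le_iSup_denseSeq (h.tendsto ω) (denseSeq S 0))

theorem coverTime_nonneg (h : IsGrowthModel P μ τ σs) (ω : Ω) : 0 ≤ coverTime τ σs ω :=
  (h.pos ω).le.trans (h.tau_zero_le_coverTime ω)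

theorem coverTime_le (h : IsGrowthModel P μ τ σs) (ω : Ω) :
    coverTime τ σs ω ≤ τ 0 ω + diam (univ : Set S) :=
  h.coverTime_eq ω ▸ ciSup_le fun _ => (arrivalTime_le (h.tendsto ω) _ 0).trans
    (by gcongr; exact dist_le_diam_of_mem isBounded_of_compactSpace (mem_univ _) (mem_univ _))

theorem measurable_coverTime [OpensMeasurableSpace S] (h : IsGrowthModel P μ τ σs) :
    Measurable (coverTime τ σs) := by
  rw [funext h.coverTime_eq]
  exact .iSup fun n => .iInf fun i =>
    (h.meas_τ i).add ((continuous_const.dist continuous_id).measurable.comp (h.meas_σ i))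

variable [OpensMeasurableSpace S] [IsProbabilityMeasure P] [IsProbabilityMeasure μ]

theorem integrable_coverTime (h : IsGrowthModel P μ τ σs) : Integrable (coverTime τ σs) P := by
  have hτ : Integrable (τ 0) P := (h.identDistrib_interArrival 0).integrable_iff.2
    (.of_integral_ne_zero (by simp [integral_id_expMeasure_one]))
  refine (hτ.add (integrable_const (diam (univ : Set S)))).mono'
    h.measurable_coverTime.aestronglyMeasurable (ae_of_all _ fun ω => ?_)
  rw [Real.norm_of_nonneg (h.coverTime_nonneg ω)]
  exact h.coverTime_le ω

theorem one_le_integral_coverTime (h : IsGrowthModel P μ τ σs) :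
    1 ≤ ∫ ω, coverTime τ σs ω ∂P :=
  calc 1 = ∫ ω, τ 0 ω ∂P :=
        ((h.identDistrib_interArrival 0).integral_eq.trans integral_id_expMeasure_one).symm
    _ ≤ ∫ ω, coverTime τ σs ω ∂P :=
        integral_mono_of_nonneg (ae_of_all _ fun ω => (h.pos ω).le) h.integrable_coverTime
          (ae_of_all _ h.tau_zero_le_coverTime)

theorem exists_coverTime_lt_lt_tau (h : IsGrowthModel P μ τ σs) {m : ℝ}
    (hm : ∫ ω, coverTime τ σs ω ∂P ≤ m) (hm0 : 0 < m) {k : ℕ} (hk : 5 * m ≤ k) :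
    ∃ ω, coverTime τ σs ω < 3 * m ∧ 3 * m < τ k ω := by
  have hmarkov : P.real {ω | 3 * m ≤ coverTime τ σs ω} ≤ 3⁻¹ := by
    have := mul_meas_ge_le_integral_of_nonneg (ae_of_all _ h.coverTime_nonneg)
      h.integrable_coverTime (3 * m)
    rw [← one_div, le_div_iff₀ three_pos]
    nlinarith
  have hchernoff : P.real {ω | τ k ω ≤ 3 * m} ≤ 2⁻¹ :=
    (h.measureReal_tau_le_le k _).trans (exp_three_mul_mul_inv_two_pow_succ_le hk)
  obtain ⟨ω, hC, hτ⟩ := exists_notMem_notMem_of_measureReal_add_lt_one (P := P)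
    (A := {ω | 3 * m ≤ coverTime τ σs ω}) (B := {ω | τ k ω ≤ 3 * m}) (by linarith)
  exact ⟨ω, not_le.1 hC, not_le.1 hτ⟩

end IsGrowthModel

/-- There is an absolute constant `κ₁` such that for the standardized growth model on any
connected compact metric space, the diameter satisfies `Δ ≤ κ₁ (E C)²`. -/
theorem growth_model_diameter_le_mean_sq :
    ∃ κ₁ : ℝ, 0 < κ₁ ∧
      ∀ (S : Type) [MetricSpace S] [CompactSpace S] [ConnectedSpace S] [Nonempty S]
        [MeasurableSpace S] [BorelSpace S]
        (Ω : Type) [MeasurableSpace Ω] (P : Measure Ω) [IsProbabilityMeasure P]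
        (μ : Measure S) [IsProbabilityMeasure μ]
        (τ : ℕ → Ω → ℝ) (σs : ℕ → Ω → S),
        IsGrowthModel P μ τ σs →
          Metric.diam (Set.univ : Set S) ≤ κ₁ * (∫ ω, coverTime τ σs ω ∂P) ^ 2 := by
  refine ⟨36, by norm_num, fun S _ _ _ _ _ _ Ω _ P _ μ _ τ σs h => ?_⟩
  set m := ∫ ω, coverTime τ σs ω ∂P
  have hm : 1 ≤ m := h.one_le_integral_coverTime
  obtain ⟨ω, hC, hτ⟩ :=
    h.exists_coverTime_lt_lt_tau le_rfl (by linarith) (Nat.le_ceil (5 * m))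
  have hcover := univ_subset_biUnion_closedBall (h.tau_nonneg ω) (h.mono ω).monotone
    (h.tendsto ω) hC.le hτ
  calc diam (univ : Set S) ≤ (Finset.range ⌈5 * m⌉₊).card * (2 * (3 * m)) :=
        isPreconnected_univ.diam_le_card_mul_of_subset_biUnion_closedBall (by linarith) hcover
    _ ≤ 36 * m ^ 2 := by
        rw [Finset.card_range]
        nlinarith [Nat.ceil_lt_add_one (by linarith : 0 ≤ 5 * m)]

end
end
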